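/- arXiv:2510.01333 — 2 statements merged into one kernel-verified Lean document; each statement's English description precedes it below -/
import Mathlib

section
/- Let A_1, …, A_g be orthogonal projections on a finite-dimensional Hilbert space, and let ψ be a unit vector such that ‖A_g ⋯ A_2 A_1 ψ‖² ≤ 1 − ε for some ε ∈ [0,1]. Then there exists some index χ ∈ [g] with ‖A_χ ψ‖² ≤ 1 − ε/(4g). -/
/-!
Run the walk `φ₀ = ψ`, `φₖ = Aₖ φₖ₋₁`. By Pythagoras `‖ψ‖² - ‖φ_g‖² = D := ∑ ‖φₖ₋₁ - φₖ‖²`.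
Since `Aₖψ ⟂ range (1 - Aₖ)`, each step loses
`Re ⟪ψ, φₖ₋₁ - φₖ⟫ = Re ⟪ψ - Aₖψ, φₖ₋₁ - φₖ⟫ ≤ ‖ψ - Aₖψ‖ ‖φₖ₋₁ - φₖ‖`, so Cauchy–Schwarz gives
`‖ψ‖ ‖φ_g‖ ≥ Re ⟪ψ, φ_g⟫ ≥ ‖ψ‖² - √(E D)` with `E = ∑ (‖ψ‖² - ‖Aₖψ‖²)`. Together with
`‖ψ‖ ‖φ_g‖ ≤ (‖ψ‖² + ‖φ_g‖²) / 2` this forces `D ≤ 4 E`, and `D ≥ ε` then rules out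
`‖ψ‖² - ‖Aₖψ‖² < ε / (4g)` for every `k`.
-/

open Finset Matrix

open scoped InnerProductSpace

theorem Real.sqrt_mul_add_mul_le {a b : ℝ} (ha : 0 ≤ a) (hb : 0 ≤ b) (x y : ℝ) :
    √(a * b) + x * y ≤ √((x ^ 2 + a) * (b + y ^ 2)) := by
  refine (le_abs_self _).trans (Real.abs_le_sqrt ?_)
  rw [Real.sqrt_mul ha]
  nlinarith [Real.sq_sqrt ha, Real.sq_sqrt hb, sq_nonneg (√a * y - x * √b)]

theorem sub_sq_le_four_mul_of_sub_sqrt_le {r t a : ℝ} (ha : 0 ≤ a)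
    (h : r ^ 2 - √(a * (r ^ 2 - t ^ 2)) ≤ r * t) : r ^ 2 - t ^ 2 ≤ 4 * a := by
  -- otherwise `r * t > r ^ 2 - (r ^ 2 - t ^ 2) / 2 = (r ^ 2 + t ^ 2) / 2`, against AM-GM
  by_contra! hlt
  have hs : √(a * (r ^ 2 - t ^ 2)) < (r ^ 2 - t ^ 2) / 2 := by
    rw [Real.sqrt_lt' (by linarith)]
    nlinarith
  nlinarith [sq_nonneg (r - t)]

namespace LinearMap.IsSymmetricProjection

variable {𝕜 E : Type*} [RCLike 𝕜] [NormedAddCommGroup E] [InnerProductSpace 𝕜 E]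
  {T : E →ₗ[𝕜] E}

theorem inner_apply_sub_apply_eq_zero (hT : T.IsSymmetricProjection) (x y : E) :
    ⟪T x, y - T y⟫_𝕜 = 0 := by
  rw [hT.isSymmetric, map_sub, ← Module.End.mul_apply, hT.isIdempotentElem.eq, sub_self,
    inner_zero_right]

theorem norm_sq_eq_norm_sq_apply_add_norm_sq_sub (hT : T.IsSymmetricProjection) (x : E) :
    ‖x‖ ^ 2 = ‖T x‖ ^ 2 + ‖x - T x‖ ^ 2 := by
  have h := norm_add_sq (𝕜 := 𝕜) (T x) (x - T x)
  rwa [hT.inner_apply_sub_apply_eq_zero, map_zero, mul_zero, add_zero, add_sub_cancel] at h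

theorem norm_apply_le (hT : T.IsSymmetricProjection) (x : E) : ‖T x‖ ≤ ‖x‖ :=
  (sq_le_sq₀ (norm_nonneg _) (norm_nonneg _)).mp <| by
    nlinarith [hT.norm_sq_eq_norm_sq_apply_add_norm_sq_sub x, sq_nonneg ‖x - T x‖]

theorem re_inner_sub_apply_le (hT : T.IsSymmetricProjection) (x y : E) :
    RCLike.re ⟪x, y - T y⟫_𝕜 ≤ ‖x - T x‖ * ‖y - T y‖ := by
  rw [← sub_zero ⟪x, y - T y⟫_𝕜, ← hT.inner_apply_sub_apply_eq_zero x y, ← inner_sub_left]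
  exact re_inner_le_norm _ _

end LinearMap.IsSymmetricProjection

section ListProd

variable {𝕜 E : Type*} [RCLike 𝕜] [NormedAddCommGroup E] [InnerProductSpace 𝕜 E]
  {l : List (Module.End 𝕜 E)}

theorem norm_list_prod_apply_le (hl : ∀ T ∈ l, T.IsSymmetricProjection) (x : E) :
    ‖l.prod x‖ ≤ ‖x‖ := by
  induction l with
  | nil => simp
  | cons T l ih =>
    rw [List.prod_cons, Module.End.mul_apply]
    exact ((hl T List.mem_cons_self).norm_apply_le _).trans (ih fun S hS => hl S (.tail T hS))

theorem sum_map_norm_sq_sub_norm_sq_apply_nonneg (hl : ∀ T ∈ l, T.IsSymmetricProjection)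
    (x : E) : 0 ≤ (l.map fun T => ‖x‖ ^ 2 - ‖T x‖ ^ 2).sum :=
  List.sum_nonneg fun _ hd => by
    obtain ⟨T, hT, rfl⟩ := List.mem_map.mp hd
    exact sub_nonneg.mpr (pow_le_pow_left₀ (norm_nonneg _) ((hl T hT).norm_apply_le x) 2)

theorem norm_sq_sub_sqrt_le_re_inner_list_prod_apply (hl : ∀ T ∈ l, T.IsSymmetricProjection)
    (x : E) :
    ‖x‖ ^ 2 - √((l.map fun T => ‖x‖ ^ 2 - ‖T x‖ ^ 2).sum * (‖x‖ ^ 2 - ‖l.prod x‖ ^ 2)) ≤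
      RCLike.re ⟪x, l.prod x⟫_𝕜 := by
  induction l with
  | nil =>
    simp only [List.map_nil, List.sum_nil, zero_mul, Real.sqrt_zero, sub_zero, List.prod_nil,
      Module.End.one_apply]
    exact (inner_self_eq_norm_sq x).ge
  | cons T l ih =>
    have hT := hl T List.mem_cons_self
    have hl' : ∀ S ∈ l, S.IsSymmetricProjection := fun S hS => hl S (.tail T hS)
    set y := l.prod x
    have hstep := Real.sqrt_mul_add_mul_le (sum_map_norm_sq_sub_norm_sq_apply_nonneg hl' x)
      (sub_nonneg.mpr (pow_le_pow_left₀ (norm_nonneg y) (norm_list_prod_apply_le hl' x) 2))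
      ‖x - T x‖ ‖y - T y‖
    have hx := hT.norm_sq_eq_norm_sq_apply_add_norm_sq_sub x
    have hy := hT.norm_sq_eq_norm_sq_apply_add_norm_sq_sub y
    have hre : RCLike.re ⟪x, T y⟫_𝕜 = RCLike.re ⟪x, y⟫_𝕜 - RCLike.re ⟪x, y - T y⟫_𝕜 := by
      rw [inner_sub_right, map_sub, sub_sub_cancel]
    rw [List.map_cons, List.sum_cons, List.prod_cons, Module.End.mul_apply,
      show ‖x‖ ^ 2 - ‖T x‖ ^ 2 = ‖x - T x‖ ^ 2 by linarith,
      show ‖x‖ ^ 2 - ‖T y‖ ^ 2 = ‖x‖ ^ 2 - ‖y‖ ^ 2 + ‖y - T y‖ ^ 2 by linarith, hre]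
    linarith [ih hl', hT.re_inner_sub_apply_le x y]

theorem norm_sq_sub_norm_sq_list_prod_apply_le (hl : ∀ T ∈ l, T.IsSymmetricProjection) (x : E) :
    ‖x‖ ^ 2 - ‖l.prod x‖ ^ 2 ≤ 4 * (l.map fun T => ‖x‖ ^ 2 - ‖T x‖ ^ 2).sum :=
  sub_sq_le_four_mul_of_sub_sqrt_le (sum_map_norm_sq_sub_norm_sq_apply_nonneg hl x) <|
    (norm_sq_sub_sqrt_le_re_inner_list_prod_apply hl x).trans (re_inner_le_norm x (l.prod x))

end ListProd

theorem Matrix.isSymmetricProjection_toLpLinAlgEquiv {𝕜 n : Type*} [RCLike 𝕜] [Fintype n]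
    [DecidableEq n] {A : Matrix n n 𝕜} (hA : A.IsHermitian) (hA' : IsIdempotentElem A) :
    (toLpLinAlgEquiv 2 A).IsSymmetricProjection :=
  ⟨hA'.map _, isSymmetric_toEuclideanLin_iff.mpr hA⟩

theorem Complex.sum_normSq_eq_norm_toLp_sq {ι : Type*} [Fintype ι] (v : ι → ℂ) :
    ∑ i, Complex.normSq (v i) = ‖WithLp.toLp 2 v‖ ^ 2 := by
  simp [EuclideanSpace.norm_sq_eq, Complex.normSq_eq_norm_sq]

theorem converse_detectability_lemma_general
    {g : ℕ} (hg : 0 < g) {V : Type*} [Fintype V] [DecidableEq V]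
    (A : Fin g → Matrix V V ℂ)
    (hherm : ∀ χ, (A χ).IsHermitian) (hidem : ∀ χ, A χ * A χ = A χ)
    (ψ : V → ℂ) (hψ : ∑ i, Complex.normSq (ψ i) = 1)
    (ε : ℝ)
    (hprod : ∑ i, Complex.normSq (((List.ofFn A).reverse.prod).mulVec ψ i) ≤ 1 - ε) :
    ∃ χ : Fin g, ∑ i, Complex.normSq ((A χ).mulVec ψ i) ≤ 1 - ε / (4 * g) := by
  set L := toLpLinAlgEquiv (n := V) (R := ℂ) 2
  have hproj : ∀ P ∈ (List.ofFn (L ∘ A)).reverse, P.IsSymmetricProjection := by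
    simp only [List.mem_reverse, List.mem_ofFn]
    rintro _ ⟨χ, rfl⟩
    exact isSymmetricProjection_toLpLinAlgEquiv (hherm χ) (hidem χ)
  have hdeficit := norm_sq_sub_norm_sq_list_prod_apply_le hproj (WithLp.toLp 2 ψ)
  rw [List.map_reverse, List.sum_reverse, List.map_ofFn, List.sum_ofFn, ← List.map_ofFn,
    ← List.map_reverse, ← map_list_prod] at hdeficit
  simp only [Complex.sum_normSq_eq_norm_toLp_sq] at hψ hprod ⊢
  have hL : ∀ M v, L M (WithLp.toLp 2 v) = WithLp.toLp 2 (M *ᵥ v) := fun _ _ => rfl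
  simp only [hL, Function.comp_apply, hψ] at hdeficit
  by_contra! hfar
  have hsum : ∑ χ, (1 - ‖WithLp.toLp 2 (A χ *ᵥ ψ)‖ ^ 2) < ∑ _χ : Fin g, ε / (4 * g) :=
    sum_lt_sum_of_nonempty ⟨⟨0, hg⟩, mem_univ _⟩ fun χ _ => by linarith [hfar χ]
  have hquarter : (g : ℝ) * (ε / (4 * g)) = ε / 4 := by field_simp
  rw [sum_const, card_univ, Fintype.card_fin, nsmul_eq_mul, hquarter] at hsum
  linarith

/-- Converse to the detectability lemma: if `A_1, …, A_g` are orthogonal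
projections and `‖A_g ⋯ A_1 ψ‖² ≤ 1 − ε` for a unit vector `ψ`, then some
`A_χ` satisfies `‖A_χ ψ‖² ≤ 1 − ε/(4g)`. -/
theorem converse_detectability_lemma
    {g : ℕ} (hg : 0 < g) {V : Type*} [Fintype V] [DecidableEq V]
    (A : Fin g → Matrix V V ℂ)
    (hherm : ∀ χ, (A χ).IsHermitian) (hidem : ∀ χ, A χ * A χ = A χ)
    (ψ : V → ℂ) (hψ : ∑ i, Complex.normSq (ψ i) = 1)
    (ε : ℝ) (hε : ε ∈ Set.Icc (0:ℝ) 1)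
    (hprod : ∑ i, Complex.normSq (((List.ofFn A).reverse.prod).mulVec ψ i) ≤ 1 - ε) :
    ∃ χ : Fin g, ∑ i, Complex.normSq ((A χ).mulVec ψ i) ≤ 1 - ε / (4 * g) :=
  converse_detectability_lemma_general hg A hherm hidem ψ hψ ε hprod
end

section
/- Let Z_1, …, Z_{n+k} be (arbitrarily correlated) {0,1}-valued random variables, and let S be a uniformly random subset of [n+k] of size k, independent of the Z_i. Then for any δ, ν ∈ [0,1], the probability that Σ_{i∈S} Z_i ≤ k·δ and simultaneously Σ_{i∉S} Z_i ≥ n·(δ+ν) is at most exp(−2ν²nk²/((n+k)(k+1))). -/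
/-!
Fix the outcome `ω`; the statement then counts `k`-subsets `S`. If `∑_{i ∈ S} Z_i ≤ kδ` and
`∑_{i ∉ S} Z_i ≥ n(δ + ν)`, the complement `Sᶜ` is an `n`-subset whose sum exceeds its mean
`n m / (n + k)` (with `m = ∑ Z_i`) by `t = nkν / (n + k)`, so it suffices to prove Serfling's
inequality for sampling without replacement. Its exponential moment `∑_{|A| = j} e^{h ∑_A z}` is
bounded by induction on `j`: every `(j + 1)`-subset arises `j + 1` times as `insert x B` with
`|B| = j`, Hoeffding's lemma controls the average of `e^{h z_x}` over `x ∉ B`, and what remains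
depends on `B` only through `e^{h' ∑_B z}` with `h' = h (N - j - 1) / (N - j)`, which is the
induction hypothesis. Markov's inequality at the optimal `h` gives the counting bound, and
averaging it over `ω` gives the probability bound.
-/

open MeasureTheory ProbabilityTheory Finset

theorem Finset.sum_exp_mul_le_of_mem_Icc {ι : Type*} {s : Finset ι} (hs : s.Nonempty)
    {f : ι → ℝ} {a b : ℝ} (hf : ∀ i ∈ s, f i ∈ Set.Icc a b) (t : ℝ) :
    ∑ i ∈ s, Real.exp (t * f i) ≤
      #s * Real.exp (t * (∑ i ∈ s, f i) / #s + (b - a) ^ 2 * t ^ 2 / 8) := by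
  let _ : MeasurableSpace s := ⊤
  have : Nonempty s := hs.to_subtype
  set μ := (PMF.uniformOfFintype s).toMeasure
  have hs' : (0 : ℝ) < #s := by exact_mod_cast hs.card_pos
  have hmean (g : s → ℝ) : ∫ i, g i ∂μ = (#s : ℝ)⁻¹ * ∑ i, g i := by
    simp [μ, PMF.integral_eq_sum, PMF.uniformOfFintype_apply, Finset.mul_sum]
  have hoeffding := (hasSubgaussianMGF_of_mem_Icc (μ := μ) (X := fun i => f i)
    Measurable.of_discrete.aemeasurable (ae_of_all _ fun i => hf i i.2)).mgf_le t
  have hparam : (((‖b - a‖₊ / 2) ^ 2 : NNReal) : ℝ) = (b - a) ^ 2 / 4 := by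
    simp [div_pow, sq_abs]; ring
  simp only [mgf, hmean, hparam, mul_sub, Real.exp_sub, ← Finset.sum_div, Finset.sum_coe_sort s f,
    Finset.sum_coe_sort s fun i => Real.exp (t * f i)] at hoeffding
  rw [inv_mul_le_iff₀ hs', div_le_iff₀ (Real.exp_pos _), mul_assoc, ← Real.exp_add] at hoeffding
  refine hoeffding.trans_eq ?_
  congr 2
  ring

theorem Finset.succ_nsmul_sum_powersetCard_succ {α M : Type*} [Fintype α] [DecidableEq α]
    [AddCommMonoid M] (j : ℕ) (F : Finset α → M) :
    (j + 1) • ∑ A ∈ powersetCard (j + 1) univ, F A =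
      ∑ B ∈ powersetCard j univ, ∑ x ∈ Bᶜ, F (insert x B) := by
  have hcard : ∀ A ∈ powersetCard (j + 1) (univ : Finset α), (j + 1) • F A = ∑ _x ∈ A, F A := by
    intro A hA
    rw [sum_const, (mem_powersetCard.1 hA).2]
  rw [smul_sum, sum_congr rfl hcard, sum_sigma', sum_sigma']
  refine sum_nbij' (fun p => ⟨p.1.erase p.2, p.2⟩) (fun p => ⟨insert p.2 p.1, p.2⟩)
    ?_ ?_ ?_ ?_ ?_
  all_goals
    rintro ⟨A, x⟩ hA
    simp only [mem_sigma, mem_powersetCard_univ, mem_compl] at hA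
  · simp [card_erase_of_mem hA.2, hA.1]
  · simp [card_insert_of_notMem hA.2, hA.1]
  · simp [insert_erase hA.2]
  · simp [erase_insert hA.2]
  · simp [insert_erase hA.2]

/-- For `A` uniform among the `j`-subsets of a population of size `N` with total `m` and values
in an interval of length `√c`, Serfling's bound is `E e^{h ∑_A z} ≤ e^{serflingExponent N j m c h}`;
the factor `N - j + 1` instead of `N` is the gain over sampling with replacement. -/
noncomputable def serflingExponent (N j m c h : ℝ) : ℝ :=
  h * j * m / N + c * h ^ 2 * j * (N - j + 1) / (8 * N)

theorem serflingExponent_succ_le {N j m c h : ℝ} (hj : 0 ≤ j) (hjN : j + 1 ≤ N) (hc : 0 ≤ c) :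
    h * m / (N - j) + c * h ^ 2 / 8 + serflingExponent N j m c (h * ((N - j - 1) / (N - j))) ≤
      serflingExponent N (j + 1) m c h := by
  have hR : 0 < N - j := by linarith
  have hN : 0 < N := by linarith
  have hgap : serflingExponent N (j + 1) m c h -
      (h * m / (N - j) + c * h ^ 2 / 8 + serflingExponent N j m c (h * ((N - j - 1) / (N - j)))) =
      c * h ^ 2 * j * (N - j - 1) / (8 * N * (N - j) ^ 2) := by
    unfold serflingExponent
    field_simp
    ring
  have : 0 ≤ c * h ^ 2 * j * (N - j - 1) / (8 * N * (N - j) ^ 2) := by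
    have : 0 ≤ N - j - 1 := by linarith
    positivity
  linarith

theorem serflingExponent_sub_mul_eq (N r m c t : ℝ) (hrN : r = 0 ∨ N ≠ 0) :
    serflingExponent N r m c (4 * t * N / (c * r * (N - r + 1))) -
      4 * t * N / (c * r * (N - r + 1)) * (r * m / N + t) =
      -(2 * t ^ 2 * N / (c * r * (N - r + 1))) := by
  rcases eq_or_ne (c * r * (N - r + 1)) 0 with hD | hD
  · simp [serflingExponent, hD]
  · have hN : N ≠ 0 := by
      rcases hrN with hr | hN
      · simp [hr] at hD
      · exact hN
    unfold serflingExponent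
    field_simp
    ring

section Serfling

variable {α : Type*} [Fintype α] {z : α → ℝ} {a b : ℝ}

theorem sum_compl_exp_mul_sum_insert_le [DecidableEq α] (hz : ∀ i, z i ∈ Set.Icc a b)
    {B : Finset α} (hB : #B < Fintype.card α) (h : ℝ) :
    ∑ x ∈ Bᶜ, Real.exp (h * ∑ i ∈ insert x B, z i) ≤
      (Fintype.card α - #B) *
        Real.exp (h * (∑ i, z i) / (Fintype.card α - #B) + (b - a) ^ 2 * h ^ 2 / 8) *
        Real.exp (h * ((Fintype.card α - #B - 1) / (Fintype.card α - #B)) * ∑ i ∈ B, z i) := by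
  have hBc : Bᶜ.Nonempty := by
    rw [← card_pos, card_compl]; omega
  have hcard : (#Bᶜ : ℝ) = Fintype.card α - #B := by
    rw [card_compl, Nat.cast_sub hB.le]
  have hsplit : ∑ i ∈ Bᶜ, z i = ∑ i, z i - ∑ i ∈ B, z i := by
    rw [eq_sub_iff_add_eq, add_comm, sum_add_sum_compl]
  have hfactor : ∑ x ∈ Bᶜ, Real.exp (h * ∑ i ∈ insert x B, z i) =
      (∑ x ∈ Bᶜ, Real.exp (h * z x)) * Real.exp (h * ∑ i ∈ B, z i) := by
    rw [sum_mul]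
    refine sum_congr rfl fun x hx => ?_
    rw [sum_insert (mem_compl.1 hx), mul_add, Real.exp_add]
  have hR : (0 : ℝ) < Fintype.card α - #B := by rw [← hcard]; exact_mod_cast hBc.card_pos
  rw [hfactor]
  refine (mul_le_mul_of_nonneg_right (sum_exp_mul_le_of_mem_Icc hBc (fun i _ => hz i) h)
    (Real.exp_pos _).le).trans_eq ?_
  rw [hcard, hsplit, mul_assoc, mul_assoc, ← Real.exp_add, ← Real.exp_add]
  congr 2
  field_simp
  ring

theorem sum_powersetCard_exp_mul_sum_le (hz : ∀ i, z i ∈ Set.Icc a b) {j : ℕ}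
    (hj : j ≤ Fintype.card α) (h : ℝ) :
    ∑ A ∈ powersetCard j univ, Real.exp (h * ∑ i ∈ A, z i) ≤
      (Fintype.card α).choose j *
        Real.exp (serflingExponent (Fintype.card α) j (∑ i, z i) ((b - a) ^ 2) h) := by
  classical
  induction j generalizing h with
  | zero => simp [serflingExponent]
  | succ j ih =>
    set N := Fintype.card α
    set R : ℝ := N - j
    have hR : 0 < R := by simp only [R]; linarith [(by exact_mod_cast hj : (j : ℝ) + 1 ≤ N)]
    set C := Real.exp (h * (∑ i, z i) / R + (b - a) ^ 2 * h ^ 2 / 8)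
    have hstep : ∀ B ∈ powersetCard j (univ : Finset α),
        ∑ x ∈ Bᶜ, Real.exp (h * ∑ i ∈ insert x B, z i) ≤
          R * C * Real.exp (h * ((R - 1) / R) * ∑ i ∈ B, z i) := by
      intro B hB
      rw [mem_powersetCard_univ] at hB
      subst hB
      exact sum_compl_exp_mul_sum_insert_le hz (by omega) h
    have hchoose : R * N.choose j = (j + 1) * N.choose (j + 1) := by
      have := congrArg (Nat.cast : ℕ → ℝ) (Nat.choose_succ_right_eq N j)
      push_cast [Nat.cast_sub (by omega : j ≤ N)] at this
      linear_combination -this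
    have hexp := serflingExponent_succ_le (N := N) (j := j) (m := ∑ i, z i) (h := h)
      j.cast_nonneg (by exact_mod_cast hj) (sq_nonneg (b - a))
    refine le_of_mul_le_mul_left ?_ (by positivity : (0 : ℝ) < j + 1)
    calc (j + 1 : ℝ) * ∑ A ∈ powersetCard (j + 1) univ, Real.exp (h * ∑ i ∈ A, z i)
        = ∑ B ∈ powersetCard j univ, ∑ x ∈ Bᶜ, Real.exp (h * ∑ i ∈ insert x B, z i) := by
          have := succ_nsmul_sum_powersetCard_succ j fun A => Real.exp (h * ∑ i ∈ A, z i)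
          rwa [nsmul_eq_mul, Nat.cast_succ] at this
      _ ≤ ∑ B ∈ powersetCard j univ, R * C * Real.exp (h * ((R - 1) / R) * ∑ i ∈ B, z i) :=
          sum_le_sum hstep
      _ ≤ R * C * (N.choose j *
            Real.exp (serflingExponent N j (∑ i, z i) ((b - a) ^ 2) (h * ((R - 1) / R)))) := by
          rw [← mul_sum]
          exact mul_le_mul_of_nonneg_left (ih (by omega) _) (by positivity)
      _ ≤ (j + 1) * (N.choose (j + 1) *
            Real.exp (serflingExponent N (j + 1 : ℕ) (∑ i, z i) ((b - a) ^ 2) h)) := by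
          rw [mul_mul_mul_comm, hchoose, ← Real.exp_add, mul_assoc, Nat.cast_succ]
          gcongr

theorem card_powersetCard_filter_sum_ge_le (hz : ∀ i, z i ∈ Set.Icc a b) {r : ℕ}
    (hr : r ≤ Fintype.card α) {t : ℝ} (ht : 0 ≤ t) :
    #{A ∈ powersetCard r univ | r * (∑ i, z i) / Fintype.card α + t ≤ ∑ i ∈ A, z i} ≤
      (Fintype.card α).choose r * Real.exp (-(2 * t ^ 2 * Fintype.card α /
        ((b - a) ^ 2 * r * (Fintype.card α - r + 1)))) := by
  set N := Fintype.card α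
  set θ := r * (∑ i, z i) / N + t
  set h := 4 * t * N / ((b - a) ^ 2 * r * (N - r + 1))
  have hh : 0 ≤ h := by
    have : (r : ℝ) ≤ N := by exact_mod_cast hr
    have : 0 ≤ (N : ℝ) - r + 1 := by linarith
    positivity
  have hmarkov : #{A ∈ powersetCard r univ | θ ≤ ∑ i ∈ A, z i} • Real.exp (h * θ) ≤
      N.choose r * Real.exp (serflingExponent N r (∑ i, z i) ((b - a) ^ 2) h) := by
    refine (card_nsmul_le_sum _ _ _ fun A hA => ?_).trans
      ((sum_le_sum_of_subset_of_nonneg (filter_subset _ _) fun _ _ _ => (Real.exp_pos _).le).trans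
        (sum_powersetCard_exp_mul_sum_le hz hr h))
    exact Real.exp_le_exp.2 (mul_le_mul_of_nonneg_left (mem_filter.1 hA).2 hh)
  rw [nsmul_eq_mul, ← le_div_iff₀ (Real.exp_pos _), mul_div_assoc, ← Real.exp_sub,
    serflingExponent_sub_mul_eq] at hmarkov
  · exact hmarkov
  · simp only [Nat.cast_eq_zero, ne_eq]; omega

theorem card_powersetCard_filter_sampling_le [DecidableEq α] (hz : ∀ i, z i ∈ Set.Icc 0 1)
    {n k : ℕ} (hcard : Fintype.card α = n + k) (δ : ℝ) {ν : ℝ} (hν : 0 ≤ ν) :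
    #{S ∈ powersetCard k univ | ∑ i ∈ S, z i ≤ k * δ ∧ n * (δ + ν) ≤ ∑ i ∈ Sᶜ, z i} ≤
      (n + k).choose k * Real.exp (-(2 * ν ^ 2 * n * k ^ 2) / ((n + k) * (k + 1))) := by
  have hchoose :
      #{S ∈ powersetCard k univ | ∑ i ∈ S, z i ≤ k * δ ∧ n * (δ + ν) ≤ ∑ i ∈ Sᶜ, z i} ≤
        (n + k).choose k :=
    (card_filter_le _ _).trans_eq (by rw [card_powersetCard, card_univ, hcard])
  rcases Nat.eq_zero_or_pos n with rfl | hn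
  · simpa using hchoose
  rcases Nat.eq_zero_or_pos k with rfl | hk
  · simpa using hchoose
  have hN : (0 : ℝ) < n + k := by positivity
  set t : ℝ := n * k * ν / (n + k)
  calc (#{S ∈ powersetCard k univ | ∑ i ∈ S, z i ≤ k * δ ∧ n * (δ + ν) ≤ ∑ i ∈ Sᶜ, z i} : ℝ)
      ≤ #{A ∈ powersetCard n univ | n * (∑ i, z i) / Fintype.card α + t ≤ ∑ i ∈ A, z i} := by
        refine Nat.cast_le.2 (card_le_card_of_injOn (compl : Finset α → Finset α)
          (fun S hS => ?_) compl_injective.injOn)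
        simp only [coe_filter, mem_powersetCard_univ, Set.mem_ofPred_eq] at hS ⊢
        obtain ⟨hSk, hS, hSc⟩ := hS
        refine ⟨by rw [card_compl, hcard, hSk]; omega, ?_⟩
        have hsplit := sum_add_sum_compl S z
        rw [hcard, Nat.cast_add, ← add_div, div_le_iff₀ hN]
        nlinarith [mul_le_mul_of_nonneg_left hS (show (0 : ℝ) ≤ n by positivity),
          mul_le_mul_of_nonneg_left hSc (show (0 : ℝ) ≤ k by positivity)]
    _ ≤ (Fintype.card α).choose n * Real.exp (-(2 * t ^ 2 * Fintype.card α /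
          ((1 - 0) ^ 2 * n * (Fintype.card α - n + 1)))) :=
        card_powersetCard_filter_sum_ge_le hz (by omega) (by positivity)
    _ = (n + k).choose k * Real.exp (-(2 * ν ^ 2 * n * k ^ 2) / ((n + k) * (k + 1))) := by
        rw [hcard, Nat.choose_symm_add]
        congr 2
        push_cast
        simp only [t]
        field_simp
        ring

end Serfling

open Classical in
theorem sum_measureReal_le_of_forall_card_filter_le {Ω ι : Type*} [MeasurableSpace Ω]
    {μ : Measure Ω} [IsProbabilityMeasure μ] (s : Finset ι) {A : ι → Set Ω}
    (hA : ∀ i, MeasurableSet (A i)) {c : ℝ} (hc : ∀ ω, (#{i ∈ s | ω ∈ A i} : ℝ) ≤ c) :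
    ∑ i ∈ s, μ.real (A i) ≤ c := by
  have hcount (ω : Ω) : ∑ i ∈ s, (A i).indicator (1 : Ω → ℝ) ω = #{i ∈ s | ω ∈ A i} := by
    simp [Set.indicator_apply, sum_boole]
  calc ∑ i ∈ s, μ.real (A i) = ∫ ω, ∑ i ∈ s, (A i).indicator (1 : Ω → ℝ) ω ∂μ := by
        rw [integral_finsetSum s fun i _ => (integrable_const 1).indicator (hA i)]
        simp only [integral_indicator_one (hA _)]
    _ ≤ ∫ _, c ∂μ :=
        integral_mono_of_nonneg (ae_of_all _ fun ω => (Nat.cast_nonneg _).trans_eq (hcount ω).symm)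
          (integrable_const c) (ae_of_all _ fun ω => (hcount ω).trans_le (hc ω))
    _ = c := by simp

theorem sampling_without_replacement_general
    {Ω : Type*} [MeasurableSpace Ω] (μ : Measure Ω) [IsProbabilityMeasure μ]
    (n k : ℕ) (Z : Fin (n + k) → Ω → ℕ)
    (hZm : ∀ i, Measurable (Z i)) (hZb : ∀ i ω, Z i ω ≤ 1)
    (δ ν : ℝ) (hν : ν ∈ Set.Icc (0:ℝ) 1) :
    ((Finset.univ.filter (fun S : Finset (Fin (n + k)) => S.card = k)).card : ℝ)⁻¹ *
      ∑ S ∈ Finset.univ.filter (fun S : Finset (Fin (n + k)) => S.card = k),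
        (μ {ω | ((∑ i ∈ S, Z i ω : ℕ) : ℝ) ≤ k * δ ∧
                (n : ℝ) * (δ + ν) ≤ ((∑ i ∈ Sᶜ, Z i ω : ℕ) : ℝ)}).toReal
      ≤ Real.exp (-(2 * ν ^ 2 * n * k ^ 2) / ((n + k) * (k + 1))) := by
  have hsubsets :
      univ.filter (fun S : Finset (Fin (n + k)) => S.card = k) = powersetCard k univ := by
    ext; simp
  rw [hsubsets, card_powersetCard, card_univ, Fintype.card_fin,
    inv_mul_le_iff₀ (by exact_mod_cast Nat.choose_pos (by omega))]
  refine sum_measureReal_le_of_forall_card_filter_le _ (fun S => ?_) fun ω => ?_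
  · measurability
  · convert card_powersetCard_filter_sampling_le (z := fun i => (Z i ω : ℝ))
      (fun i => ⟨by positivity, by exact_mod_cast hZb i ω⟩) (Fintype.card_fin _) δ hν.1 using 4
    simp

/-- Sampling-without-replacement concentration (Tomamichel–Leverrier, Lemma 6):
for arbitrarily correlated binary random variables `Z_1, …, Z_{n+k}` and a
uniformly random subset `S ⊆ [n+k]` of size `k` (independent of the `Z_i`),
the probability that `Σ_{i∈S} Z_i ≤ kδ` while `Σ_{i∉S} Z_i ≥ n(δ+ν)` is at
most `exp(−2ν²nk²/((n+k)(k+1)))`. -/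
theorem sampling_without_replacement
    {Ω : Type*} [MeasurableSpace Ω] (μ : Measure Ω) [IsProbabilityMeasure μ]
    (n k : ℕ) (Z : Fin (n + k) → Ω → ℕ)
    (hZm : ∀ i, Measurable (Z i)) (hZb : ∀ i ω, Z i ω ≤ 1)
    (δ ν : ℝ) (hδ : δ ∈ Set.Icc (0:ℝ) 1) (hν : ν ∈ Set.Icc (0:ℝ) 1) :
    ((Finset.univ.filter (fun S : Finset (Fin (n + k)) => S.card = k)).card : ℝ)⁻¹ *
      ∑ S ∈ Finset.univ.filter (fun S : Finset (Fin (n + k)) => S.card = k),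
        (μ {ω | ((∑ i ∈ S, Z i ω : ℕ) : ℝ) ≤ k * δ ∧
                (n : ℝ) * (δ + ν) ≤ ((∑ i ∈ Sᶜ, Z i ω : ℕ) : ℝ)}).toReal
      ≤ Real.exp (-(2 * ν ^ 2 * n * k ^ 2) / ((n + k) * (k + 1))) :=
  sampling_without_replacement_general μ n k Z hZm hZb δ ν hν
end
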